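/- Let s be a schedule with commits and let t_i, t_j be distinct transactions. It is impossible that both of the following hold simultaneously: (a) there is a conflicting pair in s consisting of an operation of t_i at an earlier position than an operation q of t_j with the commit position of t_i earlier than the position of q, and (b) there is a conflicting pair in s consisting of an operation of t_j at an earlier position than an operation q' of t_i with the commit position of t_j earlier than the position of q'. (For example, the partial order pairs W_iC_iW_j and W_jC_jW_i cannot both occur between the same two transactions.) -/
import Mathlib


/-- The kind of an operation: read or write. -/
inductive OpKind where
  | read : OpKind
  | write : OpKind
deriving DecidableEq

/-- An operation: a transaction identifier, an object identifier, and a kind. -/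
structure Op where
  txn : ℕ
  obj : ℕ
  kind : OpKind

/-- Transaction `t` appears in the schedule `s`. -/
def TxnIn (s : List Op) (t : ℕ) : Prop :=
  ∃ (i : ℕ) (p : Op), s[i]? = some p ∧ p.txn = t

/-- A schedule with commits: a list of operations, together with a commit
position for each transaction such that every operation of a transaction occurs
at an earlier position than its commit position, and distinct transactions
(appearing in the schedule) have distinct commit positions. -/
structure CommittedSchedule where
  ops : List Op
  commitPos : ℕ → ℕ
  ops_lt_commit : ∀ (i : ℕ) (p : Op), ops[i]? = some p → i < commitPos p.txn
  commit_inj : ∀ t t' : ℕ, TxnIn ops t → TxnIn ops t' →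
    commitPos t = commitPos t' → t = t'

/-- A conflicting pair of 'committed-before' form from `ti` to `tj`: an
operation `p` of `ti` at an earlier position than a conflicting operation `q`
of `tj`, with the commit position of `ti` earlier than the position of `q`
(one of the partial order pairs WCR, WCW, or RCW). -/
def CommittedBeforeConflict (s : CommittedSchedule) (ti tj : ℕ) : Prop :=
  ∃ (i j : ℕ) (p q : Op), i < j ∧ s.ops[i]? = some p ∧ s.ops[j]? = some q ∧
    p.txn = ti ∧ q.txn = tj ∧ ti ≠ tj ∧ p.obj = q.obj ∧
    (p.kind = OpKind.write ∨ q.kind = OpKind.write) ∧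
    s.commitPos ti < j

/-- Two conflicting pairs of 'committed-before' form in opposite directions
cannot both occur between the same two distinct transactions (e.g., the partial
order pairs `WᵢCᵢWⱼ` and `WⱼCⱼWᵢ` cannot coexist). -/
theorem committedBefore_conflicts_not_symmetric
    (s : CommittedSchedule) (ti tj : ℕ) (hne : ti ≠ tj) :
    ¬ (CommittedBeforeConflict s ti tj ∧ CommittedBeforeConflict s tj ti) := by
  rintro ⟨⟨i, j, p, q, hij, hp, hq, hpt, hqt, _, _, _, hcj⟩,
          ⟨i', j', p', q', hij', hp', hq', hpt', hqt', _, _, _, hcj'⟩⟩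
  have h1 : s.commitPos ti < s.commitPos tj := by
    have := s.ops_lt_commit j q hq
    rw [hqt] at this; omega
  have h2 : s.commitPos tj < s.commitPos ti := by
    have := s.ops_lt_commit j' q' hq'
    rw [hqt'] at this; omega
  omega
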